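/- arXiv:1309.2701 — 6 statements merged into one kernel-verified Lean document; each statement's English description precedes it below -/
import Mathlib

section
/- For every integer N ≥ 1 and real ρ > 0, every eigenvalue λ ∈ ℂ of the matrix A(N,ρ) (i.e., every root of its characteristic polynomial) is a real number and is strictly negative. -/
/-!
Weighting row `k` by the detailed-balance weight `w k > 0` makes `A` symmetric, so `A` is
diagonally similar to the symmetric matrix `W^{1/2} A W^{-1/2}` and its spectrum is real.
The off-diagonal entries of `A` are nonnegative and row `n` sums to `-1/(n+1)`, so every
Gershgorin disc lies in the open left half-plane.
-/

/-- The tridiagonal matrix `A(N,ρ)` of the finite population processor sharing model. -/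
noncomputable def matA (N : ℕ) (ρ : ℝ) : Matrix (Fin N) (Fin N) ℝ :=
  Matrix.of fun n m =>
    if (m : ℕ) = (n : ℕ) then -1 - ρ * ((N : ℝ) - (n : ℕ) - 1) / N
    else if (m : ℕ) = (n : ℕ) + 1 then ρ * ((N : ℝ) - (n : ℕ) - 1) / N
    else if (m : ℕ) + 1 = (n : ℕ) then ((n : ℕ) : ℝ) / ((n : ℕ) + 1)
    else 0

open Matrix Finset

namespace Matrix

variable {n : Type*} [Fintype n] [DecidableEq n]

theorem im_eq_zero_of_isRoot_charpoly_of_weighted_symm (A : Matrix n n ℝ) (w : n → ℝ)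
    (hw : ∀ i, 0 < w i) (hA : ∀ i j, w i * A i j = w j * A j i) {μ : ℂ}
    (hμ : (A.map Complex.ofReal).charpoly.IsRoot μ) : μ.im = 0 := by
  set d : n → ℝ := fun i => √(w i)
  have hd : ∀ i, d i ≠ 0 := fun i => (Real.sqrt_pos.2 (hw i)).ne'
  have hd_sq : ∀ i, d i ^ 2 = w i := fun i => Real.sq_sqrt (hw i).le
  set S := diagonal d * A * diagonal d⁻¹ with hS_def
  have hS : S.IsHermitian := by
    rw [isHermitian_iff_isSymm]
    ext i j
    simp only [S, transpose_apply, mul_diagonal, diagonal_mul, Pi.inv_apply]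
    field_simp [hd i, hd j]
    rw [hd_sq, hd_sq, hA]
  have hchar : S.charpoly = A.charpoly := by
    rw [hS_def, mul_assoc, charpoly_mul_comm, mul_assoc, diagonal_mul_diagonal]
    simp [hd]
  have hspec : μ ∈ spectrum ℂ (S.map Complex.ofRealHom) := by
    rwa [mem_spectrum_iff_isRoot_charpoly, charpoly_map, hchar, ← charpoly_map]
  rw [(hS.map _ fun _ => by simp).spectrum_eq_image_range] at hspec
  obtain ⟨_, _, rfl⟩ := hspec
  simp

theorem re_neg_of_isRoot_charpoly_of_row_sum_neg (A : Matrix n n ℝ)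
    (hA : ∀ i j, i ≠ j → 0 ≤ A i j) (hrow : ∀ i, ∑ j, A i j < 0) {μ : ℂ}
    (hμ : (A.map Complex.ofReal).charpoly.IsRoot μ) : μ.re < 0 := by
  have hμ' : Module.End.HasEigenvalue (toLin' (A.map Complex.ofReal)) μ := by
    rwa [Module.End.hasEigenvalue_iff_isRoot_charpoly, charpoly_toLin']
  obtain ⟨k, hk⟩ := eigenvalue_mem_ball hμ'
  have hoff :
      ∑ j ∈ univ.erase k, ‖(A.map Complex.ofReal) k j‖ = ∑ j ∈ univ.erase k, A k j :=
    sum_congr rfl fun j hj => by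
      simp [abs_of_nonneg (hA k j (ne_of_mem_erase hj).symm)]
  have hre : μ.re - A k k ≤ dist μ (A k k) := by
    simpa [Complex.dist_eq] using Complex.re_le_norm (μ - A k k)
  rw [Metric.mem_closedBall, hoff] at hk
  have hk' := hrow k
  rw [← add_sum_erase _ _ (mem_univ k)] at hk'
  simp only [map_apply] at hk
  linarith

theorem weighted_symm_of_tridiagonal {R : Type*} [MulZeroClass R] {N : ℕ}
    (A : Matrix (Fin N) (Fin N) R) (w : Fin N → R)
    (hfar : ∀ i j : Fin N, (i : ℕ) + 1 < j → A i j = 0 ∧ A j i = 0)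
    (hadj : ∀ i j : Fin N, (j : ℕ) = i + 1 → w i * A i j = w j * A j i) (i j : Fin N) :
    w i * A i j = w j * A j i := by
  wlog hij : i ≤ j generalizing i j
  · exact (this j i (le_of_not_ge hij)).symm
  rcases hij.eq_or_lt with rfl | hlt
  · rfl
  by_cases hj : (j : ℕ) = i + 1
  · exact hadj i j hj
  · obtain ⟨h₁, h₂⟩ := hfar i j (by omega)
    rw [h₁, h₂, mul_zero, mul_zero]

end Matrix

theorem Fin.sum_ite_val_eq {M : Type*} [AddCommMonoid M] (N k : ℕ) (c : M) :
    ∑ m : Fin N, (if (m : ℕ) = k then c else 0) = if k < N then c else 0 := by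
  simp only [Fin.sum_univ_eq_sum_range (fun m => if m = k then c else 0), sum_ite_eq', mem_range]

theorem Fin.sum_ite_val_add_one_eq {M : Type*} [AddCommMonoid M] (N k : ℕ) (c : M) :
    ∑ m : Fin N, (if (m : ℕ) + 1 = k then c else 0) = if 0 < k ∧ k ≤ N then c else 0 := by
  rw [Fin.sum_univ_eq_sum_range (fun m => if m + 1 = k then c else 0)]
  cases k <;> simp [sum_ite_eq']

namespace matA

variable {N : ℕ} {ρ : ℝ}

theorem apply_eq_zero {i j : Fin N} (h : (i : ℕ) + 1 < j ∨ (j : ℕ) + 1 < i) :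
    matA N ρ i j = 0 := by
  simp only [matA, of_apply]
  rw [if_neg (by omega), if_neg (by omega), if_neg (by omega)]

theorem apply_of_val_eq_add_one {i j : Fin N} (h : (j : ℕ) = i + 1) :
    matA N ρ i j = ρ * ((N : ℝ) - i - 1) / N := by
  simp only [matA, of_apply]
  rw [if_neg (by omega), if_pos h]

theorem apply_of_val_add_one_eq {i j : Fin N} (h : (j : ℕ) = i + 1) :
    matA N ρ j i = ((i : ℝ) + 1) / ((i : ℝ) + 2) := by
  simp only [matA, of_apply]
  rw [if_neg (by omega), if_neg (by omega), if_pos h.symm, h]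
  push_cast
  ring

theorem apply_nonneg_of_ne (hρ : 0 ≤ ρ) {i j : Fin N} (h : i ≠ j) : 0 ≤ matA N ρ i j := by
  have hi : (i : ℝ) + 1 ≤ N := by exact_mod_cast i.isLt
  simp only [matA, of_apply]
  split_ifs with h₁
  · exact absurd (Fin.ext h₁).symm h
  · exact div_nonneg (mul_nonneg hρ (by linarith)) (Nat.cast_nonneg N)
  · positivity
  · rfl

theorem row_sum (i : Fin N) : ∑ j, matA N ρ i j = -1 / ((i : ℝ) + 1) := by
  have hsplit : ∀ j : Fin N, matA N ρ i j =
      (if (j : ℕ) = i then -1 - ρ * ((N : ℝ) - i - 1) / N else 0)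
        + (if (j : ℕ) = i + 1 then ρ * ((N : ℝ) - i - 1) / N else 0)
        + (if (j : ℕ) + 1 = i then (i : ℝ) / (i + 1) else 0) := by
    intro j
    simp only [matA, of_apply]
    split_ifs <;> first | (exfalso; omega) | ring
  simp only [hsplit, sum_add_distrib, Fin.sum_ite_val_eq, Fin.sum_ite_val_add_one_eq, i.isLt,
    if_true]
  have hsup : (if (i : ℕ) + 1 < N then ρ * ((N : ℝ) - i - 1) / N else 0)
      = ρ * ((N : ℝ) - i - 1) / N := by
    split_ifs with h
    · rfl
    · have : (i : ℝ) + 1 = N := by exact_mod_cast (by omega : (i : ℕ) + 1 = N)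
      rw [show (N : ℝ) - i - 1 = 0 by linarith, mul_zero, zero_div]
  have hsub : (if 0 < (i : ℕ) ∧ (i : ℕ) ≤ N then (i : ℝ) / (i + 1) else 0)
      = (i : ℝ) / (i + 1) := by
    split_ifs with h
    · rfl
    · simp [show (i : ℕ) = 0 by omega]
  rw [hsup, hsub]
  field_simp
  ring

/-- Detailed-balance weights: `weight (k + 1) * A (k + 1) k = weight k * A k (k + 1)`. -/
noncomputable def weight (N : ℕ) (ρ : ℝ) : ℕ → ℝ
  | 0 => 1
  | k + 1 => weight N ρ k * (ρ * ((N : ℝ) - k - 1) / N) * (((k : ℝ) + 2) / ((k : ℝ) + 1))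

theorem weight_pos (hρ : 0 < ρ) {k : ℕ} (hk : k < N) : 0 < weight N ρ k := by
  induction k with
  | zero => simp [weight]
  | succ k ih =>
    have hN : (0 : ℝ) < N := by exact_mod_cast (by omega : 0 < N)
    have hk' : (k : ℝ) + 1 < N := by exact_mod_cast hk
    have hsup : 0 < ρ * ((N : ℝ) - k - 1) / N := div_pos (mul_pos hρ (by linarith)) hN
    exact mul_pos (mul_pos (ih (by omega)) hsup) (by positivity)

theorem weight_mul_symm (i j : Fin N) :
    weight N ρ i * matA N ρ i j = weight N ρ j * matA N ρ j i := by
  refine weighted_symm_of_tridiagonal _ (fun k => weight N ρ k)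
    (fun i j h => ⟨apply_eq_zero (Or.inl h), apply_eq_zero (Or.inr h)⟩) (fun i j h => ?_) i j
  rw [apply_of_val_eq_add_one h, apply_of_val_add_one_eq h, h, weight]
  field_simp

end matA

theorem stmt2_general (N : ℕ) (ρ : ℝ) (hρ : 0 < ρ) (lam : ℂ)
    (hlam : (((matA N ρ).map Complex.ofReal).charpoly).IsRoot lam) :
    lam.im = 0 ∧ lam.re < 0 := by
  refine ⟨im_eq_zero_of_isRoot_charpoly_of_weighted_symm _ (fun k : Fin N => matA.weight N ρ k)
      (fun k => matA.weight_pos hρ k.isLt) matA.weight_mul_symm hlam,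
    re_neg_of_isRoot_charpoly_of_row_sum_neg _ (fun _ _ h => matA.apply_nonneg_of_ne hρ.le h)
      (fun i => ?_) hlam⟩
  rw [matA.row_sum]
  exact div_neg_of_neg_of_pos (by norm_num) (by positivity)

/-- Every (complex) eigenvalue of `A(N,ρ)` is real and strictly negative. -/
theorem stmt2 (N : ℕ) (hN : 1 ≤ N) (ρ : ℝ) (hρ : 0 < ρ) (lam : ℂ)
    (hlam : (((matA N ρ).map Complex.ofReal).charpoly).IsRoot lam) :
    lam.im = 0 ∧ lam.re < 0 :=
  stmt2_general N ρ hρ lam hlam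
end

section
/- Let A(γ) denote, for each real γ, the unique positive real solution of γ − A + 2/A² = 0. Then A(γ) − γ − 2/γ² = O(γ^{−5}) as γ → +∞, and A(γ) − √(−2/γ) + 1/γ² = O(|γ|^{−7/2}) as γ → −∞. -/
/-!
For `γ > 0` the root satisfies `A - γ = 2 / A² > 0`, so
`A - γ - 2/γ² = -2 (A - γ)(A + γ) / (A² γ²) = -4 (A + γ) / (A⁴ γ²)`, which is at most `8/γ⁵`
in size.

For `γ = -t < 0` the root satisfies `A² (t + A) = 2`, so it lies below `s = √(2/t)`, and
`(s - A)(s + A) = 2/t - 2/(t + A)` shows `s - A ≈ 1/t²`. Clearing denominators,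
`A - s + 1/t² = (t (s - A) + A² + A s) / (t² (t + A)(A + s))`, a fraction whose numerator is
`O(1/t)` and whose denominator is at least `t³ s ≍ t^(5/2)`.
-/

open Filter Asymptotics

lemma abs_root_sub_sub_two_div_sq_le {γ a : ℝ} (hγ : 0 < γ) (ha : 0 < a)
    (h : γ - a + 2 / a ^ 2 = 0) : |a - γ - 2 / γ ^ 2| ≤ 8 / γ ^ 5 := by
  have hcubic : (a - γ) * a ^ 2 = 2 := by
    field_simp at h
    linarith
  have hγa : γ < a := by nlinarith
  have hsplit : a - γ - 2 / γ ^ 2 = -(4 * (a + γ) / (a ^ 4 * γ ^ 2)) := by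
    field_simp
    linear_combination (a ^ 2 * γ ^ 2 - 2 * (a + γ)) * hcubic
  rw [hsplit, abs_neg, abs_of_pos (by positivity)]
  calc 4 * (a + γ) / (a ^ 4 * γ ^ 2) ≤ 4 * (2 * a) / (a ^ 4 * γ ^ 2) := by gcongr; linarith
    _ = 8 / (a ^ 3 * γ ^ 2) := by field_simp; ring
    _ ≤ 8 / (γ ^ 3 * γ ^ 2) := by gcongr
    _ = 8 / γ ^ 5 := by ring

lemma root_sub_sqrt_add_one_div_sq_bounds {t a s : ℝ} (ht : 0 < t) (ha : 0 < a) (hs : 0 < s)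
    (hst : s ^ 2 * t = 2) (h : a ^ 2 * (t + a) = 2) :
    0 ≤ a - s + 1 / t ^ 2 ∧ a - s + 1 / t ^ 2 ≤ 6 / (t ^ 4 * s) := by
  have hdiff : (s - a) * (s + a) * t * (t + a) = 2 * a := by
    linear_combination (t + a) * hst - t * h
  have has : a < s := by
    have hpos : 0 < (s - a) * ((s + a) * t * (t + a)) := by
      rw [show (s - a) * ((s + a) * t * (t + a)) = 2 * a by linear_combination hdiff]
      positivity
    linarith [(mul_pos_iff_of_pos_right (by positivity)).1 hpos]
  have hgap : t * (s - a) ≤ 2 / t := by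
    rw [le_div_iff₀ ht]
    nlinarith [mul_pos ht ha]
  have hnum : (a - s + 1 / t ^ 2) * (t ^ 2 * (t + a) * (a + s)) =
      t * (s - a) + a ^ 2 + a * s := by
    field_simp
    linear_combination (-t) * hdiff
  have hnum_le : t * (s - a) + a ^ 2 + a * s ≤ 6 / t := by
    have : a ^ 2 < 2 / t := by rw [lt_div_iff₀ ht]; nlinarith
    have : a * s < 2 / t := by rw [lt_div_iff₀ ht]; nlinarith
    have : 6 / t = 2 / t + 2 / t + 2 / t := by ring
    linarith
  have hden : t ^ 3 * s ≤ t ^ 2 * (t + a) * (a + s) := by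
    rw [show t ^ 3 * s = t ^ 2 * t * s by ring]
    gcongr <;> linarith
  have hD : 0 < t ^ 2 * (t + a) * (a + s) := by positivity
  rw [eq_div_of_mul_eq hD.ne' hnum]
  constructor
  · have : 0 ≤ t * (s - a) := by nlinarith
    positivity
  · calc (t * (s - a) + a ^ 2 + a * s) / (t ^ 2 * (t + a) * (a + s))
        ≤ (6 / t) / (t ^ 3 * s) := by gcongr
      _ = 6 / (t ^ 4 * s) := by field_simp

lemma rpow_neg_seven_div_two {t : ℝ} (ht : 0 < t) : t ^ (-(7 : ℝ) / 2) = √t / t ^ 4 := by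
  rw [Real.sqrt_eq_rpow, ← Real.rpow_natCast, ← Real.rpow_sub ht]
  norm_num

lemma abs_root_sub_sqrt_add_one_div_sq_le {γ a : ℝ} (hγ : γ < 0) (ha : 0 < a)
    (h : γ - a + 2 / a ^ 2 = 0) :
    |a - √(-2 / γ) + 1 / γ ^ 2| ≤ 6 * |γ| ^ (-(7 : ℝ) / 2) := by
  set t := -γ with htγ
  have ht : 0 < t := neg_pos.2 hγ
  rw [abs_of_neg hγ, ← htγ, rpow_neg_seven_div_two ht, show -2 / γ = 2 / t by ring,
    show 1 / γ ^ 2 = 1 / t ^ 2 by ring]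
  set s := √(2 / t)
  have hs : 0 < s := Real.sqrt_pos.2 (by positivity)
  have hst : s ^ 2 * t = 2 := by
    rw [Real.sq_sqrt (by positivity)]
    field_simp
  have hcubic : a ^ 2 * (t + a) = 2 := by
    field_simp at h
    linarith
  obtain ⟨hlo, hup⟩ := root_sub_sqrt_add_one_div_sq_bounds ht ha hs hst hcubic
  have hs_sqrt : 1 ≤ s * √t := by
    have hsq : (s * √t) ^ 2 = 2 := by rw [mul_pow, Real.sq_sqrt ht.le, hst]
    nlinarith [mul_pos hs (Real.sqrt_pos.2 ht)]
  rw [abs_of_nonneg hlo]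
  calc a - s + 1 / t ^ 2 ≤ 6 / (t ^ 4 * s) := hup
    _ ≤ 6 * (√t / t ^ 4) := by
      rw [mul_div_assoc', div_le_div_iff₀ (by positivity) (by positivity)]
      nlinarith [pow_pos ht 4]

/-- Asymptotics of the positive root `A(γ)` of `γ − A + 2/A² = 0`:
`A(γ) = γ + 2/γ² + O(γ^{−5})` as `γ → +∞`, and
`A(γ) = √(−2/γ) − 1/γ² + O(|γ|^{−7/2})` as `γ → −∞`. -/
theorem stmt9 (A : ℝ → ℝ) (hA : ∀ γ : ℝ, 0 < A γ ∧ γ - A γ + 2 / (A γ) ^ 2 = 0) :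
    ((fun γ : ℝ => A γ - γ - 2 / γ ^ 2) =O[atTop] fun γ : ℝ => 1 / γ ^ 5) ∧
    ((fun γ : ℝ => A γ - Real.sqrt (-2 / γ) + 1 / γ ^ 2) =O[atBot]
      fun γ : ℝ => |γ| ^ (-(7 : ℝ) / 2)) := by
  constructor
  · refine IsBigO.of_bound 8 ?_
    filter_upwards [eventually_gt_atTop 0] with γ hγ
    rw [Real.norm_eq_abs, Real.norm_eq_abs, abs_of_pos (one_div_pos.2 (pow_pos hγ 5)),
      mul_one_div]
    exact abs_root_sub_sub_two_div_sq_le hγ (hA γ).1 (hA γ).2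
  · refine IsBigO.of_bound 6 ?_
    filter_upwards [eventually_lt_atBot 0] with γ hγ
    rw [Real.norm_eq_abs, Real.norm_eq_abs, abs_of_nonneg (Real.rpow_nonneg (abs_nonneg γ) _)]
    exact abs_root_sub_sqrt_add_one_div_sq_le hγ (hA γ).1 (hA γ).2
end

section
/- Let A(γ) denote, for each real γ, the unique positive real solution of γ − A + 2/A² = 0, and set f(γ) = 1/A(γ) + 1/A(γ)⁴. Then γ·f(γ) → 1 as γ → +∞, and 4f(γ)/γ² → 1 as γ → −∞; i.e., f(γ) ∼ 1/γ as γ → +∞ and f(γ) ∼ γ²/4 as γ → −∞. -/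
/-!
Solving the equation for `γ` gives `γ = a - 2 / a²` with `a = A(γ)`, so both quantities
are rational functions of `a` alone:
`γ f(γ) = 1 - 1/a³ - 2/a⁶` and `4 f(γ)/γ² = 4 (a³ + 1)/(a³ - 2)²`.
Since `A(γ) > γ`, `A(γ) → ∞` as `γ → ∞`; since `A(γ)² · (-γ) < 2`, `A(γ) → 0` as `γ → -∞`.
Both rational functions tend to `1` in the respective limits.
-/

open Filter Topology

section Root

variable {γ a : ℝ}

lemma lt_of_sub_add_two_div_sq_eq_zero (ha : 0 < a) (h : γ - a + 2 / a ^ 2 = 0) : γ < a := by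
  have : 0 < 2 / a ^ 2 := by positivity
  linarith

lemma le_sqrt_two_div_neg_of_sub_add_two_div_sq_eq_zero (ha : 0 < a) (hγ : γ < 0)
    (h : γ - a + 2 / a ^ 2 = 0) : a ≤ √(2 / -γ) := by
  have hsq : a ^ 2 * (a - γ) = 2 := by
    field_simp at h
    linarith
  rw [Real.le_sqrt ha.le (div_nonneg zero_le_two (by linarith)), le_div_iff₀ (by linarith)]
  nlinarith [pow_pos ha 3]

lemma mul_inv_add_inv_pow_four_of_sub_add_two_div_sq_eq_zero (ha : a ≠ 0)
    (h : γ - a + 2 / a ^ 2 = 0) : γ * (1 / a + 1 / a ^ 4) = 1 - 1 / a ^ 3 - 2 / a ^ 6 := by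
  rw [show γ = a - 2 / a ^ 2 by linarith]
  field_simp
  ring

lemma four_mul_inv_add_inv_pow_four_div_sq_of_sub_add_two_div_sq_eq_zero (ha : a ≠ 0)
    (h : γ - a + 2 / a ^ 2 = 0) :
    4 * (1 / a + 1 / a ^ 4) / γ ^ 2 = 4 * (a ^ 3 + 1) / (a ^ 3 - 2) ^ 2 := by
  rw [show γ = a - 2 / a ^ 2 by linarith]
  field_simp

end Root

lemma tendsto_one_sub_inv_pow_three_sub_two_div_pow_six :
    Tendsto (fun x : ℝ => 1 - 1 / x ^ 3 - 2 / x ^ 6) atTop (𝓝 1) := by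
  have h3 := tendsto_const_nhds (x := (1 : ℝ)).div_atTop (tendsto_pow_atTop (n := 3) three_ne_zero)
  have h6 := tendsto_const_nhds (x := (2 : ℝ)).div_atTop (tendsto_pow_atTop (n := 6) (by norm_num))
  simpa using (tendsto_const_nhds.sub h3).sub h6

lemma tendsto_four_mul_pow_three_add_one_div_sq_nhds_zero :
    Tendsto (fun x : ℝ => 4 * (x ^ 3 + 1) / (x ^ 3 - 2) ^ 2) (𝓝 0) (𝓝 1) := by
  have hnum : Continuous fun x : ℝ => 4 * (x ^ 3 + 1) := by fun_prop
  have hden : Continuous fun x : ℝ => (x ^ 3 - 2) ^ 2 := by fun_prop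
  convert (hnum.tendsto 0).div (hden.tendsto 0) (by norm_num) using 2 <;> norm_num

lemma tendsto_sqrt_div_neg_atBot (c : ℝ) : Tendsto (fun x : ℝ => √(c / -x)) atBot (𝓝 0) := by
  have := (Real.continuous_sqrt.tendsto 0).comp
    (tendsto_const_nhds (x := c).div_atTop tendsto_neg_atBot_atTop)
  rwa [Real.sqrt_zero] at this

/-- With `A(γ)` the positive root of `γ − A + 2/A² = 0` and `f(γ) = 1/A(γ) + 1/A(γ)⁴`:
`f(γ) ∼ 1/γ` as `γ → +∞` and `f(γ) ∼ γ²/4` as `γ → −∞`. -/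
theorem stmt10 (A : ℝ → ℝ) (hA : ∀ γ : ℝ, 0 < A γ ∧ γ - A γ + 2 / (A γ) ^ 2 = 0) :
    Tendsto (fun γ : ℝ => γ * (1 / A γ + 1 / (A γ) ^ 4)) atTop (nhds 1) ∧
    Tendsto (fun γ : ℝ => 4 * (1 / A γ + 1 / (A γ) ^ 4) / γ ^ 2) atBot (nhds 1) := by
  have hA_atTop : Tendsto A atTop atTop :=
    tendsto_atTop_mono (fun γ => (lt_of_sub_add_two_div_sq_eq_zero (hA γ).1 (hA γ).2).le)
      tendsto_id
  have hA_atBot : Tendsto A atBot (𝓝 0) := by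
    refine tendsto_of_tendsto_of_tendsto_of_le_of_le' tendsto_const_nhds
      (tendsto_sqrt_div_neg_atBot 2) (.of_forall fun γ => (hA γ).1.le) ?_
    filter_upwards [eventually_lt_atBot 0] with γ hγ
    exact le_sqrt_two_div_neg_of_sub_add_two_div_sq_eq_zero (hA γ).1 hγ (hA γ).2
  constructor
  · refine (tendsto_one_sub_inv_pow_three_sub_two_div_pow_six.comp hA_atTop).congr fun γ => ?_
    exact (mul_inv_add_inv_pow_four_of_sub_add_two_div_sq_eq_zero (hA γ).1.ne' (hA γ).2).symm
  · refine (tendsto_four_mul_pow_three_add_one_div_sq_nhds_zero.comp hA_atBot).congr fun γ => ?_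
    exact (four_mul_inv_add_inv_pow_four_div_sq_of_sub_add_two_div_sq_eq_zero
      (hA γ).1.ne' (hA γ).2).symm
end

section
/- Let j ≥ 0 be an integer and α, β real numbers. Set Φ₀(z) = e^{−z²/4} He_j(z), and define Φ₁(z) = (2β/3)(z² + 8j + 4) Φ₀′(z) + (α/2 − 2β/3) z Φ₀(z). Then Φ₁″(z) + (j + 1/2 − z²/4) Φ₁(z) = α Φ₀′(z) + β z³ Φ₀(z) for all real z; i.e., Φ₁ is a particular solution of the inhomogeneous parabolic-cylinder equation with right-hand side α Φ₀′ + β z³ Φ₀. -/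
/-!
Writing functions as `e^{-z²/4} q(z)` with `q` a polynomial, differentiation becomes the operator
`q ↦ q′ - z q / 2` on polynomials. The claim is then a polynomial identity for the factor of `Φ₁`,
which becomes a ring identity once `He_j″` is eliminated by Hermite's equation
`He_j″ = z He_j′ - j He_j` (itself a consequence of `He_{j+1}′ = (j + 1) He_j`).
-/

/-- Evaluation of the `j`-th probabilists' Hermite polynomial at a real argument. -/
noncomputable def He (j : ℕ) (z : ℝ) : ℝ := Polynomial.aeval z (Polynomial.hermite j)

open Polynomial Real

namespace Polynomial

theorem derivative_hermite_succ (n : ℕ) :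
    derivative (hermite (n + 1)) = ((n + 1 : ℕ) : ℤ[X]) * hermite n := by
  induction n with
  | zero => simp
  | succ n ih =>
    rw [hermite_succ (n + 1), derivative_sub, derivative_mul, derivative_X, ih,
      derivative_mul, derivative_natCast, hermite_succ n]
    push_cast
    ring

theorem derivative_derivative_hermite (n : ℕ) :
    derivative (derivative (hermite n)) = X * derivative (hermite n) - (n : ℤ[X]) * hermite n := by
  have h : derivative (hermite n) = X * hermite n - hermite (n + 1) := by
    rw [hermite_succ]; ring
  rw [h, derivative_sub, derivative_mul, derivative_X, derivative_hermite_succ, h]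
  push_cast
  ring

theorem derivative_derivative_hermite_map {R : Type*} [Ring R] (n : ℕ) :
    derivative (derivative ((hermite n).map (Int.castRingHom R))) =
      X * derivative ((hermite n).map (Int.castRingHom R))
        - (n : R[X]) * (hermite n).map (Int.castRingHom R) := by
  simpa only [derivative_map, Polynomial.map_sub, Polynomial.map_mul, map_X,
    Polynomial.map_natCast] using congrArg (map (Int.castRingHom R)) (derivative_derivative_hermite n)

end Polynomial

/-- `gaussDeriv q` is the polynomial factor of `(e^{-z²/4} q(z))′ = e^{-z²/4} (q′(z) - z q(z)/2)`. -/
noncomputable def gaussDeriv (q : ℝ[X]) : ℝ[X] := derivative q - C (1 / 2) * X * q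

theorem hasDerivAt_gaussian_mul_eval (q : ℝ[X]) (x : ℝ) :
    HasDerivAt (fun u => exp (-u ^ 2 / 4) * q.eval u)
      (exp (-x ^ 2 / 4) * (gaussDeriv q).eval x) x := by
  have hexp : HasDerivAt (fun u : ℝ => -u ^ 2 / 4) (-x / 2) x := by
    refine ((hasDerivAt_pow 2 x).neg.div_const 4).congr_deriv ?_
    push_cast
    ring
  refine (hexp.exp.mul (q.hasDerivAt x)).congr_deriv ?_
  simp only [gaussDeriv, eval_sub, eval_mul, eval_C, eval_X]
  ring

theorem deriv_gaussian_mul_eval (q : ℝ[X]) :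
    deriv (fun u => exp (-u ^ 2 / 4) * q.eval u) =
      fun x => exp (-x ^ 2 / 4) * (gaussDeriv q).eval x :=
  funext fun x => (hasDerivAt_gaussian_mul_eval q x).deriv

/-- The polynomial factor of `Φ₁` when `Φ₀(z) = e^{-z²/4} P(z)`. -/
noncomputable def particularSolution (α β ν : ℝ) (P : ℝ[X]) : ℝ[X] :=
  C (2 * β / 3) * (X ^ 2 + C (8 * ν + 4)) * gaussDeriv P + C (α / 2 - 2 * β / 3) * X * P

theorem gaussDeriv_gaussDeriv_particularSolution (α β ν : ℝ) {P : ℝ[X]}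
    (hP : derivative (derivative P) = X * derivative P - C ν * P) :
    gaussDeriv (gaussDeriv (particularSolution α β ν P))
        + (C (ν + 1 / 2) - C (1 / 4) * X ^ 2) * particularSolution α β ν P
      = C α * gaussDeriv P + C β * X ^ 3 * P := by
  simp only [particularSolution, gaussDeriv, derivative_add, derivative_sub, derivative_mul,
    derivative_C, derivative_X, derivative_X_pow, derivative_one, derivative_zero, hP]
  refine Polynomial.funext fun x => ?_
  simp only [eval_add, eval_sub, eval_mul, eval_pow, eval_C, eval_X, eval_one, eval_zero]
  ring

theorem He_eq_eval_map (j : ℕ) (u : ℝ) : He j u = ((hermite j).map (Int.castRingHom ℝ)).eval u := by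
  rw [He, aeval_def, eval_map, algebraMap_int_eq]

/-- With `Φ₀(z) = e^{−z²/4} He_j(z)`, the function
`Φ₁(z) = (2β/3)(z² + 8j + 4) Φ₀′(z) + (α/2 − 2β/3) z Φ₀(z)` is a particular solution of
`Φ₁″ + (j + 1/2 − z²/4) Φ₁ = α Φ₀′ + β z³ Φ₀`. -/
theorem stmt12 (j : ℕ) (α β : ℝ) :
    ∀ z : ℝ,
      deriv (deriv fun w : ℝ =>
          (2 * β / 3) * (w ^ 2 + 8 * (j : ℝ) + 4)
              * deriv (fun u : ℝ => Real.exp (-u ^ 2 / 4) * He j u) w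
            + (α / 2 - 2 * β / 3) * w * (Real.exp (-w ^ 2 / 4) * He j w)) z
        + ((j : ℝ) + 1 / 2 - z ^ 2 / 4)
            * ((2 * β / 3) * (z ^ 2 + 8 * (j : ℝ) + 4)
                * deriv (fun u : ℝ => Real.exp (-u ^ 2 / 4) * He j u) z
              + (α / 2 - 2 * β / 3) * z * (Real.exp (-z ^ 2 / 4) * He j z))
      = α * deriv (fun u : ℝ => Real.exp (-u ^ 2 / 4) * He j u) z
          + β * z ^ 3 * (Real.exp (-z ^ 2 / 4) * He j z) := by
  intro z
  set P := (hermite j).map (Int.castRingHom ℝ)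
  have hPode : derivative (derivative P) = X * derivative P - C (j : ℝ) * P := by
    rw [derivative_derivative_hermite_map, map_natCast]
  simp only [He_eq_eval_map, deriv_gaussian_mul_eval]
  have hΦ₁ : (fun w => (2 * β / 3) * (w ^ 2 + 8 * (j : ℝ) + 4)
        * (exp (-w ^ 2 / 4) * (gaussDeriv P).eval w)
        + (α / 2 - 2 * β / 3) * w * (exp (-w ^ 2 / 4) * P.eval w))
      = fun w => exp (-w ^ 2 / 4) * (particularSolution α β j P).eval w := by
    funext w
    simp only [particularSolution, eval_add, eval_mul, eval_pow, eval_C, eval_X]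
    ring
  rw [hΦ₁, deriv_gaussian_mul_eval, deriv_gaussian_mul_eval]
  have hpoly := congrArg (eval z) (gaussDeriv_gaussDeriv_particularSolution α β j hPode)
  simp only [particularSolution, eval_add, eval_sub, eval_mul, eval_pow, eval_C, eval_X]
    at hpoly ⊢
  linear_combination exp (-z ^ 2 / 4) * hpoly
end

section
/- Let G(z) = (1−z)^{−1} exp(1/(1−z)) for real z < 1, and let a_n = (d^n/dz^n G)(0) / n! denote its Taylor coefficients at 0 (G is real-analytic at 0). Then a₁ = 2a₀ and, for every integer n ≥ 1, (n+1) a_{n+1} − 2(n+1) a_n + n a_{n−1} = 0; equivalently the sequence ψ(n) = a_n satisfies ψ(n+1) + (n/(n+1)) ψ(n−1) − 2ψ(n) = 0. -/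
/-!
`G` solves the first-order ODE `(1 - z)² G' = (2 - z) G` away from `z = 1`.
Differentiating it `n` times with Leibniz' rule gives
`(1 - z)² G⁽ⁿ⁺¹⁾ = (2n(1 - z) + 2 - z) G⁽ⁿ⁾ - n² G⁽ⁿ⁻¹⁾`,
and at `z = 0`, after division by `n!`, this is the three-term recurrence for the Taylor
coefficients; the case `n = 0` is `a₁ = 2a₀`.
-/

/-- The generating function `G(z) = (1−z)^{−1} exp(1/(1−z))`. -/
noncomputable def genG (z : ℝ) : ℝ := (1 - z)⁻¹ * Real.exp (1 / (1 - z))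

open scoped ContDiff

section IteratedDeriv

variable {𝕜 : Type*} [NontriviallyNormedField 𝕜] {F : Type*} [NormedAddCommGroup F]
  [NormedSpace 𝕜 F] {f : 𝕜 → F} {x : 𝕜}

theorem ContDiffAt.hasDerivAt_iteratedDeriv (hf : ContDiffAt 𝕜 ∞ f x) (n : ℕ) :
    HasDerivAt (iteratedDeriv n f) (iteratedDeriv (n + 1) f x) x := by
  have hFDeriv := hf.differentiableAt_iteratedFDeriv (m := n)
    (by exact_mod_cast WithTop.coe_lt_top _)
  rw [iteratedDeriv_succ, iteratedDeriv_eq_equiv_comp]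
  exact (LinearIsometryEquiv.differentiableAt _ |>.comp x hFDeriv).hasDerivAt

end IteratedDeriv

section ODE

variable {f : ℝ → ℝ} {s : Set ℝ}

theorem one_sub_sq_mul_iteratedDeriv_succ (hs : IsOpen s) (hf : ContDiffOn ℝ ∞ f s)
    (hode : ∀ x ∈ s, (1 - x) ^ 2 * deriv f x = (2 - x) * f x) (n : ℕ) :
    ∀ x ∈ s, (1 - x) ^ 2 * iteratedDeriv (n + 1) f x =
      (2 * n * (1 - x) + 2 - x) * iteratedDeriv n f x - n ^ 2 * iteratedDeriv (n - 1) f x := by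
  induction n with
  | zero => simpa using hode
  | succ n ih =>
    intro x hx
    have hD (k : ℕ) := (hf.contDiffAt (hs.mem_nhds hx)).hasDerivAt_iteratedDeriv k
    have hsub : HasDerivAt (fun z : ℝ => 1 - z) (-1) x := (hasDerivAt_id x).const_sub 1
    have hlhs : HasDerivAt (fun z => (1 - z) ^ 2 * iteratedDeriv (n + 1) f z) _ x :=
      (hsub.pow 2).mul (hD (n + 1))
    have hrhs : HasDerivAt (fun z => (2 * n * (1 - z) + 2 - z) * iteratedDeriv n f z
        - n ^ 2 * iteratedDeriv (n - 1) f z) _ x :=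
      ((((hsub.const_mul (2 * n : ℝ)).add_const 2).sub (hasDerivAt_id x)).mul
        (hD n)).sub ((hD (n - 1)).const_mul ((n : ℝ) ^ 2))
    have heq : (fun z => (1 - z) ^ 2 * iteratedDeriv (n + 1) f z) =ᶠ[nhds x]
        fun z => (2 * n * (1 - z) + 2 - z) * iteratedDeriv n f z
          - n ^ 2 * iteratedDeriv (n - 1) f z :=
      Filter.eventually_of_mem (hs.mem_nhds hx) ih
    have key := hlhs.unique (hrhs.congr_of_eventuallyEq heq)
    -- `n - 1 + 1 = n` fails only at `n = 0`, where the coefficient `n²` vanishes.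
    have hlast : (n : ℝ) ^ 2 * iteratedDeriv (n - 1 + 1) f x = n ^ 2 * iteratedDeriv n f x := by
      rcases n with _ | n <;> simp
    simp only [Pi.pow_apply, Pi.sub_apply, id] at key
    simp only [add_tsub_cancel_right, Nat.cast_add, Nat.cast_one]
    linear_combination key - hlast

theorem taylorCoeff_recurrence_of_ode (hs : IsOpen s) (h0 : 0 ∈ s) (hf : ContDiffOn ℝ ∞ f s)
    (hode : ∀ x ∈ s, (1 - x) ^ 2 * deriv f x = (2 - x) * f x)
    (a : ℕ → ℝ) (ha : ∀ k, a k = iteratedDeriv k f 0 / k.factorial) (n : ℕ) :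
    (n + 1) * a (n + 1) - 2 * (n + 1) * a n + n * a (n - 1) = 0 := by
  have hrec := one_sub_sq_mul_iteratedDeriv_succ hs hf hode n 0 h0
  rcases n with _ | m
  · simp only [ha, Nat.factorial] at hrec ⊢
    norm_num at hrec ⊢
    linarith
  · simp only [ha, Nat.factorial_succ, add_tsub_cancel_right] at hrec ⊢
    push_cast at hrec ⊢
    field_simp
    linear_combination hrec

end ODE

theorem contDiffOn_genG : ContDiffOn ℝ ∞ genG {z | z ≠ 1} := by
  intro x hx
  have : (1 : ℝ) - x ≠ 0 := sub_ne_zero.2 (Ne.symm hx)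
  unfold genG
  fun_prop (disch := assumption)

theorem hasDerivAt_genG {x : ℝ} (hx : x ≠ 1) :
    HasDerivAt genG ((2 - x) / (1 - x) ^ 2 * genG x) x := by
  have hne : (1 : ℝ) - x ≠ 0 := sub_ne_zero.2 (Ne.symm hx)
  have hsub : HasDerivAt (fun z : ℝ => 1 - z) (-1) x := (hasDerivAt_id x).const_sub 1
  have hinv : HasDerivAt (fun z : ℝ => (1 - z)⁻¹) ((1 - x) ^ 2)⁻¹ x := by
    simpa only [neg_neg, one_div] using hsub.fun_inv hne
  have hprod : HasDerivAt (fun z => (1 - z)⁻¹ * Real.exp (1 - z)⁻¹) _ x := hinv.mul hinv.exp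
  convert hprod using 1
  · funext z; simp [genG]
  · simp only [genG, one_div]
    field_simp
    ring

theorem one_sub_sq_mul_deriv_genG {x : ℝ} (hx : x ≠ 1) :
    (1 - x) ^ 2 * deriv genG x = (2 - x) * genG x := by
  have hne : (1 : ℝ) - x ≠ 0 := sub_ne_zero.2 (Ne.symm hx)
  rw [(hasDerivAt_genG hx).deriv]
  field_simp

/-- The Taylor coefficients `a_n = G^{(n)}(0)/n!` of `G(z) = (1−z)^{−1} e^{1/(1−z)}`
satisfy `a₁ = 2a₀` and `(n+1)a_{n+1} − 2(n+1)a_n + n a_{n−1} = 0` for `n ≥ 1`;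
i.e. `ψ(n) = a_n` solves `ψ(n+1) + (n/(n+1))ψ(n−1) − 2ψ(n) = 0`. -/
theorem stmt17 (a : ℕ → ℝ)
    (ha : ∀ n : ℕ, a n = iteratedDeriv n genG 0 / (n.factorial : ℝ)) :
    a 1 = 2 * a 0 ∧
    ∀ n : ℕ, 1 ≤ n →
      ((n : ℝ) + 1) * a (n + 1) - 2 * ((n : ℝ) + 1) * a n + (n : ℝ) * a (n - 1) = 0 := by
  have hrec := taylorCoeff_recurrence_of_ode isOpen_ne (by norm_num) contDiffOn_genG
    (fun _ hx => one_sub_sq_mul_deriv_genG hx) a ha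
  refine ⟨?_, fun n _ => hrec n⟩
  simpa [sub_eq_zero] using hrec 0
end

section
/- Let ρ > 1 be real. Define H(z) = (1−z)^{−ρ/(ρ−1)} (1 − z/ρ)^{1/(ρ−1)} for real z with |z| < 1 (both bases are then positive), and let q_n = (d^n/dz^n H)(0)/n! denote its Taylor coefficients at 0. Then ρ q₁ = (ρ+1) q₀ and, for every integer n ≥ 1, ρ(n+1) q_{n+1} − (ρ+1)(n+1) q_n + n q_{n−1} = 0; equivalently the sequence q_n satisfies the limiting recurrence ρ(q_{n+1} − q_n) + (n/(n+1)) q_{n−1} − q_n = 0. -/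
/-!
Taking the logarithmic derivative, `H'/H = ρ/((ρ-1)(1-z)) - 1/((ρ-1)(ρ-z)) = (ρ+1-z)/((1-z)(ρ-z))`,
so `H` solves the first-order equation `(1-z)(ρ-z) H' = (ρ+1-z) H` with a quadratic and a linear
coefficient. Differentiating an equation `(a + bz + cz²) f' = (d + ez) f` `n` times (Leibniz) and
evaluating at `0` gives a three-term recurrence for the Taylor coefficients of `f`.
-/

/-- For `ρ > 1`, the generating function `H(z) = (1−z)^{−ρ/(ρ−1)} (1 − z/ρ)^{1/(ρ−1)}`. -/
noncomputable def genH (ρ : ℝ) (z : ℝ) : ℝ :=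
  (1 - z) ^ (-ρ / (ρ - 1)) * (1 - z / ρ) ^ (1 / (ρ - 1))

open Set
open scoped ContDiff Nat

section QuadraticODE

variable {f : ℝ → ℝ} {U : Set ℝ}

theorem HasDerivAt.eq_zero_of_eqOn_zero {g : ℝ → ℝ} {g' z : ℝ} (hg : HasDerivAt g g' z)
    (hU : IsOpen U) (hz : z ∈ U) (h : EqOn g 0 U) : g' = 0 :=
  hg.unique <| (hasDerivAt_const z 0).congr_of_eventuallyEq <|
    h.eventuallyEq_of_mem (hU.mem_nhds hz)

theorem ContDiffOn.hasDerivAt_iteratedDeriv (hf : ContDiffOn ℝ ∞ f U) (hU : IsOpen U) (n : ℕ)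
    {z : ℝ} (hz : z ∈ U) :
    HasDerivAt (iteratedDeriv n f) (iteratedDeriv (n + 1) f z) z := by
  have hsmooth : ∀ k, ContDiffOn ℝ ∞ (iteratedDeriv k f) U := by
    intro k
    induction k with
    | zero => exact hf
    | succ k ih =>
      rw [iteratedDeriv_succ]
      exact ih.deriv_of_isOpen hU (by simp)
  rw [iteratedDeriv_succ]
  exact (((hsmooth n).differentiableOn (by simp)) z hz).differentiableAt
    (hU.mem_nhds hz) |>.hasDerivAt

variable {a b c d e : ℝ}

theorem iteratedDeriv_relation_of_ode (hf : ContDiffOn ℝ ∞ f U) (hU : IsOpen U)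
    (hode : ∀ z ∈ U, (a + b * z + c * z ^ 2) * deriv f z = (d + e * z) * f z) (n : ℕ) :
    ∀ z ∈ U, (a + b * z + c * z ^ 2) * iteratedDeriv (n + 2) f z
      + ((n + 1) * (b + 2 * c * z) - (d + e * z)) * iteratedDeriv (n + 1) f z
      + (n + 1) * (n * c - e) * iteratedDeriv n f z = 0 := by
  have hP (z : ℝ) : HasDerivAt (fun z => a + b * z + c * z ^ 2) (b + 2 * c * z) z :=
    ((((hasDerivAt_id' z).const_mul b).const_add a).add
      ((hasDerivAt_pow 2 z).const_mul c)).congr_deriv (by ring)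
  have hL (z : ℝ) : HasDerivAt (fun z => d + e * z) e z :=
    (((hasDerivAt_id' z).const_mul e).const_add d).congr_deriv (mul_one e)
  have hD (k : ℕ) {z : ℝ} (hz : z ∈ U) := hf.hasDerivAt_iteratedDeriv hU k hz
  induction n with
  | zero =>
    intro z hz
    have hg := ((hP z).mul (hD 1 hz)).sub ((hL z).mul (hD 0 hz))
    have := hg.eq_zero_of_eqOn_zero hU hz fun w hw => by
      simpa [iteratedDeriv_one, sub_eq_zero] using hode w hw
    simp only [Nat.cast_zero]
    linear_combination this
  | succ n ih =>
    intro z hz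
    have hQ : HasDerivAt (fun z => (n + 1) * (b + 2 * c * z) - (d + e * z))
        ((n + 1) * (2 * c) - e) z :=
      ((((hasDerivAt_id' z).const_mul (2 * c)).const_add b).const_mul _ |>.sub
        (hL z)).congr_deriv (by ring)
    have hg := (((hP z).mul (hD (n + 2) hz)).add (hQ.mul (hD (n + 1) hz))).add
      ((hD n hz).const_mul ((n + 1) * (n * c - e)))
    have := hg.eq_zero_of_eqOn_zero hU hz ih
    push_cast
    linear_combination this

theorem taylorCoeff_recurrence_of_ode_s18 (hf : ContDiffOn ℝ ∞ f U) (hU : IsOpen U) (h0 : 0 ∈ U)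
    (hode : ∀ z ∈ U, (a + b * z + c * z ^ 2) * deriv f z = (d + e * z) * f z) {q : ℕ → ℝ}
    (hq : ∀ n, q n = iteratedDeriv n f 0 / n !) (n : ℕ) :
    a * (n + 2) * q (n + 2) + ((n + 1) * b - d) * q (n + 1) + (n * c - e) * q n = 0 := by
  have hD (k : ℕ) : iteratedDeriv k f 0 = k ! * q k := by
    rw [hq k, mul_div_cancel₀ _ (by positivity)]
  have h := iteratedDeriv_relation_of_ode hf hU hode n 0 h0
  simp only [hD, Nat.factorial_succ, mul_zero, add_zero, zero_pow two_ne_zero] at h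
  push_cast at h
  have key : ((n + 1) * n ! : ℝ) * (a * (n + 2) * q (n + 2) + ((n + 1) * b - d) * q (n + 1)
      + (n * c - e) * q n) = 0 := by
    linear_combination h
  exact (mul_eq_zero.1 key).resolve_left (by positivity)

end QuadraticODE

section genH

variable {ρ z : ℝ}

theorem genH_bases_pos (hρ : 1 < ρ) (hz : z < 1) : 0 < 1 - z ∧ 0 < 1 - z / ρ := by
  refine ⟨by linarith, ?_⟩
  rw [sub_pos, div_lt_one (by linarith)]
  linarith

theorem genH_contDiffOn (hρ : 1 < ρ) : ContDiffOn ℝ ∞ (genH ρ) (Iio 1) := by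
  intro z hz
  obtain ⟨h₁, h₂⟩ := genH_bases_pos hρ hz
  refine ContDiffAt.contDiffWithinAt (ContDiffAt.mul ?_ ?_)
  · exact (contDiffAt_const.sub contDiffAt_id).rpow_const_of_ne h₁.ne'
  · exact (contDiffAt_const.sub (contDiffAt_id.div_const ρ)).rpow_const_of_ne h₂.ne'

theorem genH_ode (hρ : 1 < ρ) (hz : z < 1) :
    (1 - z) * (ρ - z) * deriv (genH ρ) z = (ρ + 1 - z) * genH ρ z := by
  obtain ⟨h₁, h₂⟩ := genH_bases_pos hρ hz
  have hf := ((hasDerivAt_id' z).const_sub 1).rpow_const (p := -ρ / (ρ - 1)) (Or.inl h₁.ne')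
  have hg := (((hasDerivAt_id' z).div_const ρ).const_sub 1).rpow_const (p := 1 / (ρ - 1))
    (Or.inl h₂.ne')
  have hH : HasDerivAt (genH ρ) _ z := hf.mul hg
  rw [hH.deriv, genH, Real.rpow_sub h₁, Real.rpow_sub h₂, Real.rpow_one, Real.rpow_one]
  have hρ₁ : ρ - 1 ≠ 0 := by linarith
  have hρ₀ : ρ ≠ 0 := by linarith
  have hw : ρ * (1 - z / ρ) = ρ - z := by field_simp
  -- kept opaque, otherwise `field_simp` would clear the denominator inside the `rpow` base
  generalize 1 - z / ρ = w at h₂ hw ⊢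
  field_simp
  linear_combination (1 - z) * hw

end genH

/-- The Taylor coefficients `q_n = H^{(n)}(0)/n!` of
`H(z) = (1−z)^{−ρ/(ρ−1)} (1 − z/ρ)^{1/(ρ−1)}` (with `ρ > 1`) satisfy
`ρ q₁ = (ρ+1) q₀` and `ρ(n+1) q_{n+1} − (ρ+1)(n+1) q_n + n q_{n−1} = 0` for `n ≥ 1`;
i.e. they solve the limiting recurrence `ρ(q_{n+1} − q_n) + (n/(n+1)) q_{n−1} − q_n = 0`. -/
theorem stmt18 (ρ : ℝ) (hρ : 1 < ρ) (q : ℕ → ℝ)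
    (hq : ∀ n : ℕ, q n = iteratedDeriv n (genH ρ) 0 / (n.factorial : ℝ)) :
    ρ * q 1 = (ρ + 1) * q 0 ∧
    ∀ n : ℕ, 1 ≤ n →
      ρ * ((n : ℝ) + 1) * q (n + 1) - (ρ + 1) * ((n : ℝ) + 1) * q n + (n : ℝ) * q (n - 1) = 0 := by
  have hode : ∀ z ∈ Iio (1 : ℝ),
      (ρ + -(ρ + 1) * z + 1 * z ^ 2) * deriv (genH ρ) z = (ρ + 1 + -1 * z) * genH ρ z := by
    intro z hz
    linear_combination genH_ode hρ hz
  constructor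
  · simpa [hq] using hode 0 (by norm_num)
  · rintro n hn
    obtain ⟨m, rfl⟩ := Nat.exists_eq_add_of_le' hn
    have h := taylorCoeff_recurrence_of_ode_s18 (genH_contDiffOn hρ) isOpen_Iio (by norm_num) hode hq m
    simp only [Nat.add_sub_cancel]
    push_cast
    linear_combination h
end
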